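/- Linear (1/t) convergence of the exponential loss under gradient descent: if the fixed step size satisfies 0 < η < 1/L(w(0)), then for every t ≥ 0, L(w(t+1)) ≤ 1 / (ηγ²(t+1) + 1/L(w(0))). -/

import Mathlib

/-!
Write `wₛ = w - s • ∇L(w)` for `s ∈ [0, η]` and `F s = L(wₛ)`. Then
`-F'(s) = ⟪∇L(w), ∇L(wₛ)⟫ ≥ ‖∇L(wₛ)‖² ≥ γ² F(s)²`, so `1 / F` grows at rate at least `γ²` and
one gradient step gives `1 / L(w(t+1)) ≥ 1 / L(w(t)) + ηγ²`; summing over the steps gives the rate.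

The last inequality is the margin bound `‖∇L(v)‖ ≥ ⟪u, -∇L(v)⟫ ≥ γ L(v)` for a max-margin
direction `u`. The middle one comes from the local co-coercivity
`‖∇L(w') - ∇L(w)‖² ≤ (L(w) + L(w')) / 2 · ⟪∇L(w') - ∇L(w), w' - w⟫`, which holds termwise
by the logarithmic–arithmetic mean inequality. It is applied with `w' = wₛ`, where
`(L(w) + L(wₛ)) s / 2 ≤ 1` because `s L(w) ≤ 1` and, by a second-order Taylor bound, the loss
does not increase along the segment.
-/

open scoped RealInnerProductSpace BigOperators
open Filter

/-- The exponential loss `L(w) = ∑ₙ exp(-⟨w, xₙ⟩)`. -/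
noncomputable def expLoss {d N : ℕ} (x : Fin N → EuclideanSpace ℝ (Fin d))
    (w : EuclideanSpace ℝ (Fin d)) : ℝ :=
  ∑ n, Real.exp (-⟪w, x n⟫)

/-- The gradient of the exponential loss, `∇L(w) = -∑ₙ exp(-⟨w, xₙ⟩) xₙ`. -/
noncomputable def expLossGrad {d N : ℕ} (x : Fin N → EuclideanSpace ℝ (Fin d))
    (w : EuclideanSpace ℝ (Fin d)) : EuclideanSpace ℝ (Fin d) :=
  -∑ n, Real.exp (-⟪w, x n⟫) • x n

open Real Set

/-- The logarithmic mean of `exp y` and `exp z` is at most their arithmetic mean. -/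
theorem two_mul_sq_exp_sub_exp_le (y z : ℝ) :
    2 * (exp y - exp z) ^ 2 ≤ (exp y + exp z) * ((exp y - exp z) * (y - z)) := by
  set f : ℝ → ℝ := fun t => (exp t + exp z) * (t - z) - 2 * (exp t - exp z)
  have hf : Monotone f := by
    refine monotone_of_hasDerivAt_nonneg (f' := fun t => exp z - exp t * (z - t + 1))
      (fun t => ?_) (fun t => ?_)
    · exact ((((hasDerivAt_exp t).add_const (exp z)).fun_mul
        ((hasDerivAt_id' t).sub_const z)).fun_sub
        (((hasDerivAt_exp t).sub_const (exp z)).const_mul 2)).congr_deriv (by ring)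
    · have h := mul_le_mul_of_nonneg_left (add_one_le_exp (z - t)) (exp_pos t).le
      rw [← exp_add, add_sub_cancel] at h
      simp only [Pi.zero_apply]
      linarith
  have key : 0 ≤ (exp y - exp z) * f y := by
    rcases le_total y z with h | h
    · refine mul_nonneg_of_nonpos_of_nonpos (by simpa using h) ?_
      simpa [f] using hf h
    · refine mul_nonneg (by simpa using h) ?_
      simpa [f] using hf h
  simp only [f] at key
  nlinarith [key]

theorem inv_add_mul_le_inv_of_hasDerivAt {F F' : ℝ → ℝ} {a b c : ℝ} (hab : a ≤ b)
    (hF : ∀ s ∈ Icc a b, HasDerivAt F (F' s) s) (hpos : ∀ s ∈ Icc a b, 0 < F s)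
    (hF' : ∀ s ∈ Icc a b, c * F s ^ 2 ≤ -F' s) :
    (F a)⁻¹ + c * (b - a) ≤ (F b)⁻¹ := by
  have hΨ : ∀ s ∈ Icc a b,
      HasDerivAt (fun s => (F s)⁻¹ - c * s) (-F' s / F s ^ 2 - c) s := fun s hs => by
    simpa using ((hF s hs).inv (hpos s hs).ne').fun_sub ((hasDerivAt_id' s).const_mul c)
  have hmono : MonotoneOn (fun s => (F s)⁻¹ - c * s) (Icc a b) := by
    refine monotoneOn_of_hasDerivWithinAt_nonneg (convex_Icc a b)
      (fun s hs => (hΨ s hs).continuousAt.continuousWithinAt)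
      (fun s hs => (hΨ s (interior_subset hs)).hasDerivWithinAt) fun s hs => ?_
    have hs := interior_subset hs
    rw [sub_nonneg, le_div_iff₀ (pow_pos (hpos s hs) 2)]
    exact hF' s hs
  have := hmono (left_mem_Icc.2 hab) (right_mem_Icc.2 hab) hab
  simp only at this
  linarith

theorem margin_pos {E ι : Type*} [NormedAddCommGroup E] [InnerProductSpace ℝ E] [Fintype ι]
    (x : ι → E) (hι : (Finset.univ : Finset ι).Nonempty) {γ : ℝ}
    (hγ : IsGreatest {m : ℝ | ∃ u : E, ‖u‖ = 1 ∧ m = Finset.univ.inf' hι (fun n => ⟪u, x n⟫)} γ)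
    (hsep : ∃ v : E, ∀ n, 0 < ⟪v, x n⟫) : 0 < γ := by
  obtain ⟨v, hv⟩ := hsep
  obtain ⟨n₀, -⟩ := id hι
  have hv0 : v ≠ 0 := by
    rintro rfl
    simpa using hv n₀
  refine lt_of_lt_of_le ?_ (hγ.2 ⟨(‖v‖⁻¹ : ℝ) • v, norm_smul_inv_norm hv0, rfl⟩)
  refine (Finset.lt_inf'_iff _).2 fun n _ => ?_
  rw [real_inner_smul_left]
  exact mul_pos (inv_pos.2 (norm_pos_iff.2 hv0)) (hv n)

section

variable {d N : ℕ} (x : Fin N → EuclideanSpace ℝ (Fin d))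

theorem expLoss_pos (hN : (Finset.univ : Finset (Fin N)).Nonempty)
    (w : EuclideanSpace ℝ (Fin d)) :
    0 < expLoss x w :=
  Finset.sum_pos (fun _ _ => exp_pos _) hN

theorem inner_expLossGrad (w v : EuclideanSpace ℝ (Fin d)) :
    ⟪expLossGrad x w, v⟫ = -∑ n, exp (-⟪w, x n⟫) * ⟪x n, v⟫ := by
  simp only [expLossGrad, inner_neg_left, sum_inner, real_inner_smul_left]

theorem norm_expLossGrad_le (hx : ∀ n, ‖x n‖ ≤ 1) (w : EuclideanSpace ℝ (Fin d)) :
    ‖expLossGrad x w‖ ≤ expLoss x w := by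
  rw [expLossGrad, norm_neg]
  refine (norm_sum_le _ _).trans (Finset.sum_le_sum fun n _ => ?_)
  rw [norm_smul, Real.norm_of_nonneg (exp_pos _).le]
  exact mul_le_of_le_one_right (exp_pos _).le (hx n)

theorem mul_expLoss_le_norm_expLossGrad {u : EuclideanSpace ℝ (Fin d)} (hu : ‖u‖ ≤ 1) {γ : ℝ}
    (hγ : ∀ n, γ ≤ ⟪u, x n⟫) (w : EuclideanSpace ℝ (Fin d)) :
    γ * expLoss x w ≤ ‖expLossGrad x w‖ :=
  calc γ * expLoss x w ≤ -⟪expLossGrad x w, u⟫ := by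
        rw [inner_expLossGrad, neg_neg, expLoss, Finset.mul_sum]
        refine Finset.sum_le_sum fun n _ => ?_
        rw [mul_comm, real_inner_comm u]
        exact mul_le_mul_of_nonneg_left (hγ n) (exp_pos _).le
    _ ≤ ‖expLossGrad x w‖ * ‖u‖ := (neg_le_abs _).trans (abs_real_inner_le_norm _ _)
    _ ≤ ‖expLossGrad x w‖ := mul_le_of_le_one_right (norm_nonneg _) hu

theorem hasDerivAt_expLoss_add_smul (w v : EuclideanSpace ℝ (Fin d)) (s : ℝ) :
    HasDerivAt (fun s : ℝ => expLoss x (w + s • v)) ⟪expLossGrad x (w + s • v), v⟫ s := by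
  have hterm : ∀ n, HasDerivAt (fun s : ℝ => exp (-⟪w + s • v, x n⟫))
      (exp (-⟪w + s • v, x n⟫) * -⟪v, x n⟫) s := fun n => by
    simp_rw [inner_add_left, real_inner_smul_left]
    have hlin : HasDerivAt (fun s : ℝ => -(⟪w, x n⟫ + s * ⟪v, x n⟫)) (-⟪v, x n⟫) s :=
      ((hasDerivAt_mul_const ⟪v, x n⟫).const_add ⟪w, x n⟫).neg
    exact hlin.exp
  refine (HasDerivAt.fun_sum fun n _ => hterm n).congr_deriv ?_
  rw [inner_expLossGrad, ← Finset.sum_neg_distrib]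
  simp only [mul_neg, real_inner_comm]

theorem expLossGrad_sub_expLossGrad (w w' : EuclideanSpace ℝ (Fin d)) :
    expLossGrad x w' - expLossGrad x w =
      ∑ n, (exp (-⟪w, x n⟫) - exp (-⟪w', x n⟫)) • x n := by
  simp only [expLossGrad, sub_smul, Finset.sum_sub_distrib]
  abel

theorem norm_expLossGrad_sub_sq_le (hx : ∀ n, ‖x n‖ ≤ 1) (w w' : EuclideanSpace ℝ (Fin d)) :
    ‖expLossGrad x w' - expLossGrad x w‖ ^ 2 ≤
      (expLoss x w + expLoss x w') / 2 * ⟪expLossGrad x w' - expLossGrad x w, w' - w⟫ := by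
  set y : Fin N → ℝ := fun n => -⟪w, x n⟫
  set z : Fin N → ℝ := fun n => -⟪w', x n⟫
  have hnorm : ‖expLossGrad x w' - expLossGrad x w‖ ≤ ∑ n, |exp (y n) - exp (z n)| := by
    rw [expLossGrad_sub_expLossGrad]
    refine (norm_sum_le _ _).trans (Finset.sum_le_sum fun n _ => ?_)
    rw [norm_smul, Real.norm_eq_abs]
    exact mul_le_of_le_one_right (abs_nonneg _) (hx n)
  have hinner : ⟪expLossGrad x w' - expLossGrad x w, w' - w⟫ =
      ∑ n, (exp (y n) - exp (z n)) * (y n - z n) := by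
    rw [expLossGrad_sub_expLossGrad, sum_inner]
    refine Finset.sum_congr rfl fun n _ => ?_
    rw [real_inner_smul_left, inner_sub_right, real_inner_comm w, real_inner_comm w']
    ring
  have hmean : ∀ n, 2 * (exp (y n) - exp (z n)) ^ 2 ≤
      (exp (y n) + exp (z n)) * ((exp (y n) - exp (z n)) * (y n - z n)) := fun n =>
    two_mul_sq_exp_sub_exp_le (y n) (z n)
  calc ‖expLossGrad x w' - expLossGrad x w‖ ^ 2 ≤ (∑ n, |exp (y n) - exp (z n)|) ^ 2 :=
        pow_le_pow_left₀ (norm_nonneg _) hnorm 2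
    _ ≤ (∑ n, (exp (y n) + exp (z n)) / 2) * ∑ n, (exp (y n) - exp (z n)) * (y n - z n) := by
        refine Finset.sum_sq_le_sum_mul_sum_of_sq_le_mul _ (fun n _ => by positivity)
          (fun n _ => ?_) (fun n _ => ?_)
        · exact (mul_nonneg_iff_of_pos_left (by positivity)).1
            ((mul_nonneg zero_le_two (sq_nonneg _)).trans (hmean n))
        · rw [sq_abs]
          linarith [hmean n]
    _ = _ := by
        rw [hinner, ← Finset.sum_div, Finset.sum_add_distrib]
        rfl

theorem expLoss_sub_smul_expLossGrad_le (hx : ∀ n, ‖x n‖ ≤ 1) (w : EuclideanSpace ℝ (Fin d))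
    {s : ℝ} (hs : 0 ≤ s) (hsL : s * expLoss x w ≤ 1) :
    expLoss x (w - s • expLossGrad x w) ≤ expLoss x w := by
  set g := expLossGrad x w
  set L := expLoss x w
  have hterm : ∀ n, exp (-⟪w - s • g, x n⟫) ≤
      exp (-⟪w, x n⟫) * (1 + s * ⟪x n, g⟫ + s ^ 2 * ‖g‖ ^ 2) := by
    intro n
    have hb : |⟪x n, g⟫| ≤ ‖g‖ :=
      (abs_real_inner_le_norm _ _).trans (mul_le_of_le_one_left (norm_nonneg _) (hx n))
    have ha : |s * ⟪x n, g⟫| ≤ 1 := by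
      rw [abs_mul, abs_of_nonneg hs]
      calc s * |⟪x n, g⟫| ≤ s * L :=
            mul_le_mul_of_nonneg_left (hb.trans (norm_expLossGrad_le x hx w)) hs
        _ ≤ 1 := hsL
    have hexp := (abs_le.1 (abs_exp_sub_one_sub_id_le ha)).2
    have hsq : (s * ⟪x n, g⟫) ^ 2 ≤ s ^ 2 * ‖g‖ ^ 2 := by
      rw [mul_pow, ← sq_abs ⟪x n, g⟫]
      gcongr
    have hsplit : -⟪w - s • g, x n⟫ = -⟪w, x n⟫ + s * ⟪x n, g⟫ := by
      rw [inner_sub_left, real_inner_smul_left, real_inner_comm g]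
      ring
    rw [hsplit, exp_add]
    exact mul_le_mul_of_nonneg_left (by linarith) (exp_pos _).le
  have hgrad : ∑ n, exp (-⟪w, x n⟫) * ⟪x n, g⟫ = -‖g‖ ^ 2 := by
    rw [← real_inner_self_eq_norm_sq, inner_expLossGrad, neg_neg]
  calc expLoss x (w - s • g) ≤ ∑ n, exp (-⟪w, x n⟫) * (1 + s * ⟪x n, g⟫ + s ^ 2 * ‖g‖ ^ 2) :=
        Finset.sum_le_sum fun n _ => hterm n
    _ = L - s * ‖g‖ ^ 2 * (1 - s * L) := by
        simp only [mul_add, mul_one, Finset.sum_add_distrib, mul_left_comm _ s, ← Finset.mul_sum,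
          ← Finset.sum_mul, hgrad]
        simp only [L, expLoss]
        ring
    _ ≤ L := by
        have : 0 ≤ s * ‖g‖ ^ 2 * (1 - s * L) := by
          have := sub_nonneg.2 hsL
          positivity
        linarith

theorem norm_sq_expLossGrad_le_inner (hx : ∀ n, ‖x n‖ ≤ 1)
    (hN : (Finset.univ : Finset (Fin N)).Nonempty) (w : EuclideanSpace ℝ (Fin d))
    {s : ℝ} (hs : 0 ≤ s) (hsL : s * expLoss x w ≤ 1) :
    ‖expLossGrad x (w - s • expLossGrad x w)‖ ^ 2 ≤
      ⟪expLossGrad x w, expLossGrad x (w - s • expLossGrad x w)⟫ := by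
  rcases hs.eq_or_lt with rfl | hs
  · simp
  have hco := norm_expLossGrad_sub_sq_le x hx w (w - s • expLossGrad x w)
  have hdesc := expLoss_sub_smul_expLossGrad_le x hx w hs.le hsL
  have hL := expLoss_pos x hN w
  set g := expLossGrad x w
  set g' := expLossGrad x (w - s • g)
  set K := (expLoss x w + expLoss x (w - s • g)) / 2 * s
  rw [sub_sub_cancel_left, inner_neg_right, real_inner_smul_right, ← mul_neg, ← inner_neg_left,
    neg_sub, ← mul_assoc] at hco
  have hK : 0 < K := mul_pos (by linarith [expLoss_pos x hN (w - s • g)]) hs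
  have hK1 : K ≤ 1 := by
    simp only [K]
    nlinarith
  have hI : 0 ≤ ⟪g - g', g⟫ := (mul_nonneg_iff_of_pos_left hK).1 ((sq_nonneg _).trans hco)
  have key := hco.trans (mul_le_of_le_one_left hI hK1)
  rw [norm_sub_sq_real, inner_sub_left, real_inner_self_eq_norm_sq] at key
  rw [real_inner_comm]
  linarith

theorem inv_expLoss_add_le_inv_expLoss_gd (hx : ∀ n, ‖x n‖ ≤ 1)
    (hN : (Finset.univ : Finset (Fin N)).Nonempty) {u : EuclideanSpace ℝ (Fin d)} (hu : ‖u‖ ≤ 1)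
    {γ : ℝ} (hγ0 : 0 ≤ γ) (hγ : ∀ n, γ ≤ ⟪u, x n⟫) (w : EuclideanSpace ℝ (Fin d)) {η : ℝ}
    (hη : 0 ≤ η) (hηL : η * expLoss x w ≤ 1) :
    (expLoss x w)⁻¹ + η * γ ^ 2 ≤ (expLoss x (w - η • expLossGrad x w))⁻¹ := by
  set F : ℝ → ℝ := fun s => expLoss x (w - s • expLossGrad x w)
  have hF : ∀ s,
      HasDerivAt F (-⟪expLossGrad x w, expLossGrad x (w - s • expLossGrad x w)⟫) s := by
    intro s
    simpa [F, ← sub_eq_add_neg, real_inner_comm] using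
      hasDerivAt_expLoss_add_smul x w (-expLossGrad x w) s
  have hdecay : ∀ s ∈ Set.Icc 0 η,
      γ ^ 2 * F s ^ 2 ≤ ⟪expLossGrad x w, expLossGrad x (w - s • expLossGrad x w)⟫ := by
    rintro s ⟨hs, hsη⟩
    have hsL : s * expLoss x w ≤ 1 :=
      (mul_le_mul_of_nonneg_right hsη (expLoss_pos x hN w).le).trans hηL
    calc γ ^ 2 * F s ^ 2 = (γ * F s) ^ 2 := by ring
      _ ≤ ‖expLossGrad x (w - s • expLossGrad x w)‖ ^ 2 :=
          pow_le_pow_left₀ (mul_nonneg hγ0 (expLoss_pos x hN _).le)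
            (mul_expLoss_le_norm_expLossGrad x hu hγ _) 2
      _ ≤ _ := norm_sq_expLossGrad_le_inner x hx hN w hs hsL
  have := inv_add_mul_le_inv_of_hasDerivAt hη (fun s _ => hF s)
    (fun s _ => expLoss_pos x hN _) fun s hs => (hdecay s hs).trans (neg_neg _).ge
  simpa [F, mul_comm] using this

theorem le_inv_expLoss_gd (hx : ∀ n, ‖x n‖ ≤ 1) (hN : (Finset.univ : Finset (Fin N)).Nonempty)
    {u : EuclideanSpace ℝ (Fin d)} (hu : ‖u‖ ≤ 1) {γ : ℝ} (hγ0 : 0 ≤ γ)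
    (hγ : ∀ n, γ ≤ ⟪u, x n⟫) {η : ℝ} (hη : 0 ≤ η) {w : ℕ → EuclideanSpace ℝ (Fin d)}
    (hηL : η * expLoss x (w 0) ≤ 1) (hGD : ∀ t, w (t + 1) = w t - η • expLossGrad x (w t))
    (t : ℕ) : η * γ ^ 2 * t + (expLoss x (w 0))⁻¹ ≤ (expLoss x (w t))⁻¹ := by
  induction t with
  | zero => simp
  | succ t ih =>
    have hdecr : expLoss x (w t) ≤ expLoss x (w 0) := by
      refine (inv_le_inv₀ (expLoss_pos x hN _) (expLoss_pos x hN _)).1 ?_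
      have : 0 ≤ η * γ ^ 2 * t := by positivity
      linarith
    have hstep := inv_expLoss_add_le_inv_expLoss_gd x hx hN hu hγ0 hγ (w t) hη
      ((mul_le_mul_of_nonneg_left hdecr hη).trans hηL)
    rw [hGD, Nat.cast_succ]
    linarith

end

/-- `1/t` linear convergence of the exponential loss under gradient descent:
`L(w(t+1)) ≤ 1 / (ηγ²(t+1) + 1/L(w(0)))`. -/
theorem gd_expLoss_loss_rate
    {d N : ℕ} (x : Fin N → EuclideanSpace ℝ (Fin d))
    (hx : ∀ n, ‖x n‖ ≤ 1)
    (hsep : ∃ wstar : EuclideanSpace ℝ (Fin d), ∀ n, 0 < ⟪wstar, x n⟫)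
    (hNe : (Finset.univ : Finset (Fin N)).Nonempty)
    (γ : ℝ)
    (hγ : IsGreatest {m : ℝ | ∃ u : EuclideanSpace ℝ (Fin d), ‖u‖ = 1 ∧
        m = Finset.univ.inf' hNe (fun n => ⟪u, x n⟫)} γ)
    (η : ℝ) (w : ℕ → EuclideanSpace ℝ (Fin d))
    (hη : 0 < η) (hη' : η < 1 / expLoss x (w 0))
    (hGD : ∀ t : ℕ, w (t + 1) = w t - η • expLossGrad x (w t)) :
    ∀ t : ℕ, expLoss x (w (t + 1)) ≤
      1 / (η * γ ^ 2 * (t + 1) + 1 / expLoss x (w 0)) := by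
  intro t
  have hγ0 := margin_pos x hNe hγ hsep
  obtain ⟨u, hu, hγu⟩ := hγ.1
  have hγx : ∀ n, γ ≤ ⟪u, x n⟫ := fun n => hγu ▸ Finset.inf'_le _ (Finset.mem_univ n)
  have hL0 := expLoss_pos x hNe (w 0)
  have hηL : η * expLoss x (w 0) ≤ 1 := ((lt_div_iff₀ hL0).1 hη').le
  have hrate := le_inv_expLoss_gd x hx hNe hu.le hγ0.le hγx hη.le hηL hGD (t + 1)
  rw [one_div, one_div, le_inv_comm₀ (expLoss_pos x hNe _) (by positivity)]
  exact_mod_cast hrate
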